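/- If a vertex x₁…x_ℓ of the cyclic Kautz digraph CK(d,ℓ) lies on a closed walk of length g < ℓ, then the sequence is periodic with period g, i.e., xᵢ = x_{i+g} for all i = 1,…,ℓ−g; consequently, if ℓ ≡ 1 (mod g) then no such closed walk exists. -/

import Mathlib

/-! Each arc shifts the sequence one place to the left, so after a walk of length `g` the
symbol at position `i` is the one that stood at position `i + g`. On a closed walk this makes
the vertex `g`-periodic, and if `ℓ = q g + 1` periodicity forces `x₁ = x_ℓ`, which vertices of
`CK(d,ℓ)` forbid. -/

/-- Consecutive entries are distinct. -/
abbrev consecNe {m n : ℕ} (x : Fin m → Fin n) : Prop :=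
  ∀ i j : Fin m, j.val = i.val + 1 → x i ≠ x j

/-- First entry distinct from last entry. -/
abbrev firstNeLast {m n : ℕ} (x : Fin m → Fin n) : Prop :=
  ∀ i j : Fin m, i.val = 0 → j.val = m - 1 → x i ≠ x j

/-- Vertex of the cyclic Kautz digraph. -/
abbrev ckVert {m n : ℕ} (x : Fin m → Fin n) : Prop := consecNe x ∧ firstNeLast x

/-- Arc of the cyclic Kautz digraph: `y` is the left shift of `x` with a new last
symbol distinct from `x₂` and `x_ℓ`. -/
abbrev ckAdj {m n : ℕ} (x y : Fin m → Fin n) : Prop :=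
  (∀ i j : Fin m, j.val = i.val + 1 → y i = x j) ∧
  (∀ i j : Fin m, i.val = m - 1 → j.val = 1 → y i ≠ x j) ∧
  (∀ i : Fin m, i.val = m - 1 → y i ≠ x i)

/-- A walk of length `k` in `CK(d,ℓ)` from `u` to `v`: a sequence of `k+1` vertices
starting at `u`, ending at `v`, with consecutive vertices adjacent. -/
abbrev ckWalk {m n : ℕ} (k : ℕ) (u v : Fin m → Fin n) : Prop :=
  ∃ w : Fin (k + 1) → Fin m → Fin n, w 0 = u ∧ w (Fin.last k) = v ∧
    (∀ i, ckVert (w i)) ∧ ∀ i j : Fin (k + 1), j.val = i.val + 1 → ckAdj (w i) (w j)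

theorem ckWalk.apply_eq_of_val_eq_add {m n k : ℕ} {u v : Fin m → Fin n} (h : ckWalk k u v)
    {i j : Fin m} (hij : j.val = i.val + k) : v i = u j := by
  obtain ⟨w, hw0, hwk, -, hadj⟩ := h
  have shift : ∀ t (ht : t ≤ k) (i j : Fin m), j.val = i.val + t → w ⟨t, by omega⟩ i = u j := by
    intro t
    induction t with
    | zero =>
      intro _ i j hij
      rw [show i = j from Fin.ext (by omega)]
      exact congrFun hw0 j
    | succ t ih =>
      intro ht i j hij
      calc w ⟨t + 1, by omega⟩ i = w ⟨t, by omega⟩ ⟨i + 1, by omega⟩ :=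
            (hadj ⟨t, by omega⟩ ⟨t + 1, by omega⟩ rfl).1 i ⟨i + 1, by omega⟩ rfl
        _ = u j := ih (by omega) _ j (by simp only; omega)
  rw [← hwk]
  exact shift k le_rfl i j hij

theorem apply_eq_of_val_eq_add_mul {m g : ℕ} {α : Type*} {x : Fin m → α}
    (hper : ∀ i j : Fin m, j.val = i.val + g → x i = x j) (q : ℕ) {i j : Fin m}
    (hij : j.val = i.val + q * g) : x i = x j := by
  induction q generalizing j with
  | zero => rw [show i = j from Fin.ext (by simpa using hij.symm)]
  | succ q ih =>
    have hk : i.val + q * g < m := by rw [Nat.succ_mul] at hij; omega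
    exact (ih (j := ⟨_, hk⟩) rfl).trans (hper _ j (by rw [hij, Nat.succ_mul]; simp only; omega))

theorem mod_ne_one_of_periodic {m n g : ℕ} {x : Fin m → Fin n} (hx : firstNeLast x)
    (hper : ∀ i j : Fin m, j.val = i.val + g → x i = x j) : m % g ≠ 1 := by
  intro hmod
  have hm : m = m / g * g + 1 := by have := Nat.div_add_mod' m g; omega
  exact hx ⟨0, by omega⟩ ⟨m / g * g, by omega⟩ rfl (by simp only; omega)
    (apply_eq_of_val_eq_add_mul hper (m / g) (by simp))

theorem stmt12 (d ℓ g : ℕ)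
    (x : Fin ℓ → Fin (d + 1)) (hx : ckVert x) (hw : ckWalk g x x) :
    (∀ i j : Fin ℓ, j.val = i.val + g → x i = x j) ∧ ℓ % g ≠ 1 := by
  have hper : ∀ i j : Fin ℓ, j.val = i.val + g → x i = x j :=
    fun _ _ hij => hw.apply_eq_of_val_eq_add hij
  exact ⟨hper, mod_ne_one_of_periodic hx.2 hper⟩
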